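/- arXiv:2301.09587 — 4 statements merged into one kernel-verified Lean document; each statement's English description precedes it below -/
import Mathlib

section
/- Let n be a non-negative integer, let j be an integer with 0 ≤ j ≤ n, and let α and β be complex numbers that are not negative integers. Then ∑_{k=0}^{n} (−1)^{k+j} · C(β+k, k) · C(k, j) · C(α, n−k) = (−1)^{n+j} · C(β+j, j) · C(β−α+n, n−j), where C(k,j) is the ordinary binomial coefficient of natural numbers. -/
/-!
Upper negation rewrites `C(β + k, k)` as `(-1)^k C(-β - 1, k)`. Then trinomial revision
`C(k, j) C(x, k) = C(x, j) C(x - j, k - j)` pulls `C(-β - 1, j)` out of the sum, and what is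
left is a Chu–Vandermonde convolution, equal to `C(α - β - 1 - j, n - j)`. A second upper
negation turns this into `±C(β - α + n, n - j)`.
-/

open Finset

/-- Generalized binomial coefficient `C(z,k) = z(z-1)⋯(z-k+1)/k!`. -/
noncomputable def cchoose (z : ℂ) (k : ℕ) : ℂ :=
  (∏ i ∈ Finset.range k, (z - i)) / (k.factorial : ℂ)

open Polynomial in
theorem cchoose_eq_ringChoose (z : ℂ) (k : ℕ) : cchoose z k = Ring.choose z k := by
  rw [Ring.choose_eq_smul, ← aeval_eq_smeval, aeval_def, eval₂_eq_eval_map, descPochhammer_map,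
    descPochhammer_eval_eq_prod_range, cchoose, smul_eq_mul, inv_mul_eq_div]

namespace Ring

variable {R : Type*} [CommRing R] [BinomialRing R]

theorem choose_add_natCast_self (r : R) (k : ℕ) :
    choose (r + k) k = (-1) ^ k * choose (-r - 1) k := by
  rw [show -r - 1 = -(r + 1) by ring, choose_neg, add_right_comm, add_sub_cancel_right,
    Units.smul_def, Int.coe_negOnePow_natCast, zsmul_eq_mul, ← mul_assoc, Int.cast_pow,
    Int.cast_neg, Int.cast_one, ← mul_pow, neg_one_mul, neg_neg, one_pow, one_mul]

theorem sum_range_choose_mul_choose (x y : R) (n : ℕ) :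
    ∑ m ∈ range (n + 1), choose x m * choose y (n - m) = choose (x + y) n := by
  rw [add_choose_eq n (Commute.all x y), Nat.sum_antidiagonal_eq_sum_range_succ_mk]

theorem sum_range_natChoose_mul_choose_mul_choose (x y : R) {n j : ℕ} (hj : j ≤ n) :
    ∑ k ∈ range (n + 1), (k.choose j : R) * choose x k * choose y (n - k) =
      choose x j * choose (x - j + y) (n - j) := by
  obtain ⟨d, rfl⟩ := Nat.exists_eq_add_of_le hj
  have hlow : ∀ k ∈ range j, (k.choose j : R) * choose x k * choose y (j + d - k) = 0 :=
    fun k hk => by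
      rw [Nat.choose_eq_zero_of_lt (mem_range.mp hk), Nat.cast_zero, zero_mul, zero_mul]
  rw [add_assoc, sum_range_add, sum_eq_zero hlow, zero_add, Nat.add_sub_cancel_left,
    ← sum_range_choose_mul_choose, mul_sum]
  refine sum_congr rfl fun m _ => ?_
  rw [← nsmul_eq_mul, choose_smul_choose x (Nat.le_add_right j m), Nat.add_sub_cancel_left,
    Nat.add_sub_add_left, mul_assoc]

theorem sum_neg_one_pow_mul_choose_add_mul_natChoose_mul_choose (a b : R) {n j : ℕ}
    (hj : j ≤ n) :
    ∑ k ∈ range (n + 1),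
        (-1) ^ (k + j) * choose (b + k) k * (k.choose j : R) * choose a (n - k) =
      (-1) ^ (n + j) * choose (b + j) j * choose (b - a + n) (n - j) := by
  have hterm (k : ℕ) :
      (-1) ^ (k + j) * choose (b + k) k * (k.choose j : R) * choose a (n - k) =
      (-1) ^ j * ((k.choose j : R) * choose (-b - 1) k * choose a (n - k)) := by
    rw [choose_add_natCast_self, pow_add]
    linear_combination (-1) ^ j * (k.choose j : R) * choose (-b - 1) k * choose a (n - k) *
      (Even.neg_one_pow ⟨k, rfl⟩ : (-1 : R) ^ (k + k) = 1)
  obtain ⟨d, rfl⟩ := Nat.exists_eq_add_of_le hj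
  rw [sum_congr rfl fun k _ => hterm k, ← mul_sum,
    sum_range_natChoose_mul_choose_mul_choose _ _ hj, Nat.add_sub_cancel_left,
    choose_add_natCast_self b j,
    show b - a + ((j + d : ℕ) : R) = (b - a + j) + d by push_cast; ring, choose_add_natCast_self,
    show -(b - a + j) - 1 = -b - 1 - j + a by ring]
  have hsign : (-1 : R) ^ (j + d + j) * (-1) ^ j * (-1) ^ d = (-1) ^ j := by
    rw [← pow_add, ← pow_add, show j + d + j + j + d = j + 2 * (j + d) by ring, pow_add,
      pow_mul, neg_one_sq, one_pow, mul_one]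
  linear_combination -(choose (-b - 1) j * choose (-b - 1 - j + a) d) * hsign

end Ring

theorem stmt_1_general (n j : ℕ) (hj : j ≤ n) (α β : ℂ) :
    ∑ k ∈ range (n + 1), (-1 : ℂ) ^ (k + j) * cchoose (β + k) k *
        (k.choose j : ℂ) * cchoose α (n - k) =
      (-1 : ℂ) ^ (n + j) * cchoose (β + j) j * cchoose (β - α + n) (n - j) := by
  simpa only [cchoose_eq_ringChoose] using
    Ring.sum_neg_one_pow_mul_choose_add_mul_natChoose_mul_choose α β hj

theorem stmt_1 (n j : ℕ) (hj : j ≤ n) (α β : ℂ)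
    (hα : ∀ m : ℕ, α ≠ -((m : ℂ) + 1)) (hβ : ∀ m : ℕ, β ≠ -((m : ℂ) + 1)) :
    ∑ k ∈ range (n + 1), (-1 : ℂ) ^ (k + j) * cchoose (β + k) k *
        (k.choose j : ℂ) * cchoose α (n - k) =
      (-1 : ℂ) ^ (n + j) * cchoose (β + j) j * cchoose (β - α + n) (n - j) :=
  stmt_1_general n j hj α β
end

section
/- For every non-negative integer n, the n-th harmonic number satisfies H_n = (1/2) · ∑_{k=1}^{n} (−1)^{n+k} · C(n,k) · C(n+k, k) · H_k, where C(a,b) denotes the ordinary binomial coefficient. -/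
/-!
Write `Δ` for the forward difference on `ℕ → ℝ`. Vandermonde's identity
`C(n+k,k) = ∑ᵢ C(n,i) C(k,i)` together with `C(n,k) C(k,i) = C(n,i) C(n-i,k-i)` turns the sum
`∑ₖ (-1)^(n+k) C(n,k) C(n+k,k) H_k` into `∑ᵢ C(n,i)² Δ^(n-i) H (i)`. The term `i = n` is `H_n`.
For `i < n`, `Δ^(n-i) H = Δ^(n-i-1) (k ↦ 1/(k+1))` is an explicit quotient of factorials, from which
`C(n,i) Δ^(n-i) H (i) = Δ^(n-i) H (0)`. The remaining terms therefore add up to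
`∑ᵢ C(n,i) Δ^(n-i) H (0)`, which is `H_n` by the Gregory–Newton formula.
-/

open Finset

/-- The `n`-th harmonic number `H_n = ∑_{j=1}^n 1/j`, with `H_0 = 0`. -/
noncomputable def H (n : ℕ) : ℝ :=
  ∑ j ∈ Finset.range n, 1 / ((j : ℝ) + 1)

open Nat fwdDiff

theorem Nat.add_choose_eq_sum_choose_mul_choose (n k : ℕ) :
    (n + k).choose k = ∑ i ∈ range (n + 1), n.choose i * k.choose i := by
  rw [← Nat.choose_symm_add, Nat.add_choose_eq, ← Finset.Nat.sum_antidiagonal_swap,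
    ← Finset.Nat.sum_antidiagonal_eq_sum_range_succ (fun i _ => n.choose i * k.choose i)]
  refine sum_congr rfl fun p hp => ?_
  rw [Nat.choose_symm_of_eq_add (mem_antidiagonal.mp hp).symm]
  rfl

section

variable {R : Type*} [CommRing R]

theorem sum_neg_one_pow_choose_mul_choose_mul (f : ℕ → R) {n i : ℕ} (hi : i ≤ n) :
    ∑ k ∈ range (n + 1), (-1) ^ (n + k) * n.choose k * k.choose i * f k
      = n.choose i * (Δ_[1])^[n - i] f i := by
  obtain ⟨d, rfl⟩ := Nat.exists_eq_add_of_le hi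
  rw [fwdDiff_iter_eq_sum_shift, mul_sum, show i + d + 1 = i + (d + 1) by ring, sum_range_add,
    Nat.add_sub_cancel_left]
  have hlow : ∑ k ∈ range i, (-1 : R) ^ (i + d + k) * (i + d).choose k * k.choose i * f k = 0 :=
    sum_eq_zero fun k hk => by rw [Nat.choose_eq_zero_of_lt (mem_range.mp hk)]; simp
  rw [hlow, zero_add]
  refine sum_congr rfl fun m hm => ?_
  have hm : m ≤ d := Nat.lt_succ_iff.mp (mem_range.mp hm)
  have hsign : (-1 : R) ^ (i + d + (i + m)) = (-1) ^ (d - m) := by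
    rw [show i + d + (i + m) = (d - m) + 2 * (i + m) by omega, pow_add, pow_mul]
    simp
  have hchoose := Nat.choose_mul (n := i + d) (Nat.le_add_right i m)
  rw [Nat.add_sub_cancel_left, Nat.add_sub_cancel_left] at hchoose
  rw [hsign, zsmul_eq_mul, smul_eq_mul, mul_one, mul_assoc _ ((i + d).choose (i + m) : R),
    ← Nat.cast_mul, hchoose]
  push_cast
  ring

theorem sum_neg_one_pow_choose_mul_add_choose_mul (f : ℕ → R) (n : ℕ) :
    ∑ k ∈ range (n + 1), (-1) ^ (n + k) * n.choose k * (n + k).choose k * f k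
      = ∑ i ∈ range (n + 1), n.choose i ^ 2 * (Δ_[1])^[n - i] f i := by
  simp_rw [Nat.add_choose_eq_sum_choose_mul_choose, Nat.cast_sum, Nat.cast_mul, mul_sum, sum_mul]
  rw [sum_comm]
  refine sum_congr rfl fun i hi => ?_
  rw [sq, mul_assoc,
    ← sum_neg_one_pow_choose_mul_choose_mul f (Nat.lt_succ_iff.mp (mem_range.mp hi)), mul_sum]
  refine sum_congr rfl fun k _ => ?_
  ring

end

lemma fwdDiff_iter_one_div_add_one (m i : ℕ) :
    (Δ_[1])^[m] (fun k : ℕ => 1 / ((k : ℝ) + 1)) i = (-1) ^ m * m ! * i ! / (m + i + 1)! := by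
  induction m generalizing i with
  | zero =>
    simp only [Function.iterate_zero_apply, pow_zero, Nat.factorial_zero, zero_add,
      Nat.factorial_succ]
    push_cast
    field_simp
  | succ m ih =>
    rw [Function.iterate_succ_apply', fwdDiff, ih, ih]
    push_cast [Nat.factorial_succ, show m + (i + 1) + 1 = m + i + 1 + 1 by ring,
      show m + 1 + i + 1 = m + i + 1 + 1 by ring]
    field_simp
    ring

lemma fwdDiff_H : Δ_[1] H = fun k : ℕ => 1 / ((k : ℝ) + 1) := by
  ext k
  simp [fwdDiff, H, sum_range_succ]

lemma fwdDiff_iter_succ_H (m i : ℕ) :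
    (Δ_[1])^[m + 1] H i = (-1) ^ m * m ! * i ! / (m + i + 1)! := by
  rw [Function.iterate_succ_apply, fwdDiff_H, fwdDiff_iter_one_div_add_one]

lemma choose_mul_fwdDiff_iter_succ_H (m i : ℕ) :
    ((m + i + 1).choose i : ℝ) * (Δ_[1])^[m + 1] H i = (Δ_[1])^[m + 1] H 0 := by
  have h := Nat.add_choose_mul_factorial_mul_factorial (m + 1) i
  rw [show m + 1 + i = m + i + 1 by ring, Nat.factorial_succ m] at h
  rw [fwdDiff_iter_succ_H, fwdDiff_iter_succ_H, Nat.factorial_succ m]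
  simp only [Nat.factorial_zero, Nat.cast_one, mul_one]
  field_simp
  rw [← h]
  push_cast
  ring

lemma H_eq_sum_choose_mul_fwdDiff_iter (n : ℕ) :
    H n = ∑ i ∈ range (n + 1), n.choose i * (Δ_[1])^[n - i] H 0 := by
  have h := shift_eq_sum_fwdDiff_iter 1 H n 0
  rw [zero_add, smul_eq_mul, mul_one] at h
  rw [h, ← sum_range_reflect]
  refine sum_congr rfl fun i hi => ?_
  rw [nsmul_eq_mul, Nat.add_sub_cancel, Nat.choose_symm (Nat.lt_succ_iff.mp (mem_range.mp hi))]

theorem stmt_11 (n : ℕ) :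
    H n = (1 / 2) * ∑ k ∈ Finset.Icc 1 n, (-1 : ℝ) ^ (n + k) *
      (n.choose k : ℝ) * ((n + k).choose k : ℝ) * H k := by
  have hH0 : H 0 = 0 := sum_range_zero _
  have hIcc : ∑ k ∈ range (n + 1), (-1 : ℝ) ^ (n + k) * n.choose k * (n + k).choose k * H k
      = ∑ k ∈ Icc 1 n, (-1 : ℝ) ^ (n + k) * n.choose k * (n + k).choose k * H k := by
    rw [range_succ_eq_Icc_zero, ← insert_Icc_add_one_left_eq_Icc (Nat.zero_le n),
      sum_insert (by simp), hH0, mul_zero, zero_add, zero_add]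
  have hterm : ∀ i ∈ range n,
      (n.choose i : ℝ) ^ 2 * (Δ_[1])^[n - i] H i = n.choose i * (Δ_[1])^[n - i] H 0 := by
    intro i hi
    obtain ⟨m, rfl⟩ := Nat.exists_eq_add_of_lt (mem_range.mp hi)
    rw [sq, mul_assoc, show i + m + 1 - i = m + 1 by omega, show i + m + 1 = m + i + 1 by ring,
      choose_mul_fwdDiff_iter_succ_H]
  have hNewton := H_eq_sum_choose_mul_fwdDiff_iter n
  rw [sum_range_succ, Nat.sub_self, Function.iterate_zero_apply, hH0, mul_zero, add_zero,
    ← sum_congr rfl hterm] at hNewton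
  rw [← hIcc, sum_neg_one_pow_choose_mul_add_choose_mul, sum_range_succ, Nat.sub_self,
    Function.iterate_zero_apply, Nat.choose_self, ← hNewton]
  push_cast
  ring
end

section
/- For every non-negative integer n, H_n² = (1/4) · ∑_{k=0}^{n} (−1)^{n+k} · C(n,k) · C(n+k, k) · (H_k² + H_k^{(2)}), where C(a,b) denotes the ordinary binomial coefficient. -/
/-!
The numbers `(-1)^(n+k) C(n,k) C(n+k,k)` are the coefficients of `(-1)^n P̃ₙ`, where `P̃ₙ` is the
shifted Legendre polynomial. Its reflection symmetry `P̃ₙ(1 + y) = (-1)^n P̃ₙ(-y)` reads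
`∑ₖ (-1)^(n+k) C(n,k) C(n+k,k) C(k,m) = C(n,m) C(n+m,m)`, an `(n-m)`-th forward difference of
`x ↦ C(x,n)`. Hence the alternating Legendre sum of a binomial transform `aₖ = ∑ₘ C(k,m) bₘ` is
`∑ₘ C(n,m) C(n+m,m) bₘ`. Since `H_k² + H_k^{(2)} = 2 ∑ₘ (-1)^(m-1) C(k,m) / m²`, the theorem
reduces to `∑ₘ (-1)^(m-1) C(n,m) C(n+m,m) / m² = 2 H_n²`, which, together with its companion
`∑ₘ (-1)^(m-1) C(n,m) C(n+m,m) / m = 2 H_n`, follows by induction on `n` from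
`C(n+1,m) C(n+1+m,m) - C(n,m) C(n+m,m) = (2m / (n+1)) C(n+1,m) C(n+m,m)` and
`∑ₘ (-1)^(m-1) C(n+1,m) C(n+m,m) = 1` (an `(n+1)`-st difference of a polynomial of degree `n`).

Throughout, sums over `1 ≤ m ≤ n` are written over `j ∈ range n` with `m = j + 1`.
-/

open Finset

/-- The `n`-th generalized harmonic number of order 2, `H_n^{(2)} = ∑_{j=1}^n 1/j²`. -/
noncomputable def H2 (n : ℕ) : ℝ :=
  ∑ j ∈ Finset.range n, 1 / ((j : ℝ) + 1) ^ 2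

section Binomial

lemma fwdDiff_iter_choose_eq_ite (N a b : ℕ) :
    (fwdDiff 1)^[N] (fun x ↦ x.choose b : ℕ → ℤ) a
      = if N ≤ b then (a.choose (b - N) : ℤ) else 0 := by
  split_ifs with h
  · obtain ⟨j, rfl⟩ := Nat.exists_eq_add_of_le h
    rw [fwdDiff_iter_choose, Nat.add_sub_cancel_left]
  · obtain ⟨r, rfl⟩ := Nat.exists_eq_add_of_lt (not_le.mp h)
    have hzero : (fwdDiff 1)^[b + 1] (fun x ↦ x.choose b : ℕ → ℤ) = 0 := by
      have hconst : (fwdDiff 1)^[b] (fun x ↦ x.choose b : ℕ → ℤ) = fun _ ↦ 1 := by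
        simpa using fwdDiff_iter_choose 0 b
      rw [Function.iterate_succ_apply', hconst, fwdDiff_const]
      rfl
    rw [show b + r + 1 = r + (b + 1) by omega, Function.iterate_add_apply, hzero,
      Function.iterate_fixed (by ext; simp [fwdDiff]) r]
    rfl

lemma alternating_sum_choose_mul_choose_add (N a b : ℕ) :
    ∑ i ∈ range (N + 1), (-1 : ℤ) ^ i * N.choose i * (a + i).choose b
      = (-1) ^ N * if N ≤ b then (a.choose (b - N) : ℤ) else 0 := by
  rw [← fwdDiff_iter_choose_eq_ite, fwdDiff_iter_eq_sum_shift, mul_sum]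
  refine sum_congr rfl fun i hi ↦ ?_
  have hsign : (-1 : ℤ) ^ N * (-1) ^ (N - i) = (-1) ^ i := by
    rw [← Nat.sub_add_cancel (Nat.lt_succ_iff.mp (mem_range.mp hi)), pow_add, mul_comm,
      ← mul_assoc, ← pow_add, Nat.add_sub_cancel, Even.neg_one_pow ⟨_, rfl⟩, one_mul]
  rw [smul_eq_mul, smul_eq_mul, mul_one, add_comm a, ← hsign]
  ring

lemma alternating_sum_choose_succ_mul_choose_add {N b : ℕ} (h : b < N) :
    ∑ j ∈ range N, (-1 : ℤ) ^ j * N.choose (j + 1) * (b + j + 1).choose b = 1 := by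
  have h0 := alternating_sum_choose_mul_choose_add N b b
  rw [if_neg (not_le.mpr h), mul_zero, sum_range_succ'] at h0
  simp only [pow_succ, ← add_assoc, mul_neg_one, neg_mul, sum_neg_distrib, pow_zero, add_zero,
    Nat.choose_zero_right, Nat.choose_self, Nat.cast_one, mul_one] at h0
  linear_combination -h0

lemma alternating_sum_legendre_mul_choose (n m : ℕ) :
    ∑ k ∈ range (n + 1), (-1 : ℤ) ^ (n + k) * n.choose k * (n + k).choose k * k.choose m
      = n.choose m * (n + m).choose m := by
  rcases le_or_gt m n with hmn | hnm
  · obtain ⟨N, rfl⟩ := Nat.exists_eq_add_of_le hmn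
    have hterm : ∀ i ∈ range (N + 1),
        (-1 : ℤ) ^ (m + N + (m + i)) * (m + N).choose (m + i) * (m + N + (m + i)).choose (m + i)
            * (m + i).choose m
          = (-1) ^ N * (m + N).choose m *
              ((-1) ^ i * N.choose i * (2 * m + N + i).choose (m + N)) := by
      intro i _
      have hmul :
          ((m + N).choose (m + i) : ℤ) * (m + i).choose m = (m + N).choose m * N.choose i := by
        exact_mod_cast by simpa using Nat.choose_mul (n := m + N) (Nat.le_add_right m i)
      have hsymm : (2 * m + N + i).choose (m + i) = (2 * m + N + i).choose (m + N) :=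
        Nat.choose_symm_of_eq_add (by ring)
      rw [show m + N + (m + i) = 2 * m + N + i by ring, hsymm, pow_add, pow_add, pow_mul,
        neg_one_sq, one_pow, one_mul]
      linear_combination (-1 : ℤ) ^ N * (-1) ^ i * (2 * m + N + i).choose (m + N) * hmul
    rw [show m + N + 1 = m + (N + 1) by ring, sum_range_add,
      sum_eq_zero fun k hk ↦ by simp [Nat.choose_eq_zero_of_lt (mem_range.mp hk)], zero_add,
      sum_congr rfl hterm, ← mul_sum, alternating_sum_choose_mul_choose_add, if_pos (by omega),
      show m + N - N = m by omega, show m + N + m = 2 * m + N by ring]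
    linear_combination (m + N).choose m * (2 * m + N).choose m *
      (Even.neg_one_pow ⟨N, rfl⟩ : (-1 : ℤ) ^ (N + N) = 1)
  · rw [Nat.choose_eq_zero_of_lt hnm, Nat.cast_zero, zero_mul]
    exact sum_eq_zero fun k hk ↦ by
      simp [Nat.choose_eq_zero_of_lt ((Nat.lt_succ_iff.mp (mem_range.mp hk)).trans_lt hnm)]

variable {R : Type*} [CommRing R]

lemma alternating_sum_legendre_mul_sum_choose_succ (n : ℕ) (c : ℕ → R) :
    ∑ k ∈ range (n + 1), (-1 : R) ^ (n + k) * n.choose k * (n + k).choose k *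
        ∑ j ∈ range k, (k.choose (j + 1) : R) * c j
      = ∑ j ∈ range n, (n.choose (j + 1) : R) * (n + j + 1).choose (j + 1) * c j := by
  have hextend : ∀ k ∈ range (n + 1),
      ∑ j ∈ range k, (k.choose (j + 1) : R) * c j = ∑ j ∈ range n, (k.choose (j + 1) : R) * c j :=
    fun k hk ↦ sum_subset (range_subset_range.mpr (Nat.lt_succ_iff.mp (mem_range.mp hk)))
      fun j _ hj ↦ by
        simp [Nat.choose_eq_zero_of_lt (Nat.lt_succ_of_le (not_lt.mp (mem_range.not.mp hj)))]
  rw [sum_congr rfl fun k hk ↦ congrArg (_ * ·) (hextend k hk)]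
  simp_rw [mul_sum]
  rw [sum_comm]
  refine sum_congr rfl fun j _ ↦ ?_
  have h := congrArg (Int.cast : ℤ → R) (alternating_sum_legendre_mul_choose n (j + 1))
  push_cast at h
  rw [add_assoc, ← h, sum_mul]
  exact sum_congr rfl fun k _ ↦ by ring

lemma alternating_sum_choose_succ_mul_choose_succ_add (n : ℕ) :
    ∑ j ∈ range (n + 1), (-1 : R) ^ j * (n + 1).choose (j + 1) * (n + j + 1).choose (j + 1)
      = 1 := by
  have h := congrArg (Int.cast : ℤ → R)
    (alternating_sum_choose_succ_mul_choose_add (Nat.lt_succ_self n))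
  simp only [Nat.choose_symm_of_eq_add (show n + _ + 1 = n + (_ + 1) from rfl)] at h
  push_cast at h
  exact h

lemma alternating_sum_choose_succ_succ_mul (k : ℕ) (g : ℕ → R) :
    ∑ j ∈ range (k + 1), (-1 : R) ^ j * (k + 1).choose (j + 1) * g j
      = ∑ j ∈ range (k + 1), (-1 : R) ^ j * k.choose j * g j
        + ∑ j ∈ range k, (-1 : R) ^ j * k.choose (j + 1) * g j := by
  have hlast : ∑ j ∈ range (k + 1), (-1 : R) ^ j * k.choose (j + 1) * g j
      = ∑ j ∈ range k, (-1 : R) ^ j * k.choose (j + 1) * g j := by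
    simp [sum_range_succ]
  rw [← hlast, ← sum_add_distrib]
  exact sum_congr rfl fun j _ ↦ by rw [Nat.choose_succ_succ']; push_cast; ring

end Binomial

section Field

variable {K : Type*} [Field K] [CharZero K]

lemma cast_choose_div_succ (k j : ℕ) :
    (k.choose j : K) / (j + 1) = (k + 1).choose (j + 1) / (k + 1) := by
  rw [div_eq_div_iff (Nat.cast_add_one_ne_zero j) (Nat.cast_add_one_ne_zero k)]
  exact_mod_cast (mul_comm _ _).trans (Nat.add_one_mul_choose_eq k j)

lemma cast_choose_succ_succ_eq (n j : ℕ) :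
    ((n + 1).choose (j + 1) : K)
      = n.choose (j + 1) + (j + 1) / (n + 1) * (n + 1).choose (j + 1) := by
  have h := cast_choose_div_succ (K := K) n j
  rw [div_eq_div_iff (Nat.cast_add_one_ne_zero j) (Nat.cast_add_one_ne_zero n)] at h
  have hpascal : ((n + 1).choose (j + 1) : K) = n.choose j + n.choose (j + 1) := by
    exact_mod_cast Nat.choose_succ_succ' n j
  have hn := Nat.cast_add_one_ne_zero (R := K) n
  field_simp
  linear_combination (n + 1 : K) * hpascal + h

lemma cast_choose_succ_mul_choose_add_succ (n j : ℕ) :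
    ((n + 1).choose (j + 1) : K) * (n + 1 + j + 1).choose (j + 1)
      = n.choose (j + 1) * (n + j + 1).choose (j + 1)
        + 2 * (j + 1) / (n + 1) * ((n + 1).choose (j + 1) * (n + j + 1).choose (j + 1)) := by
  have hp := cast_choose_succ_succ_eq (K := K) n j
  have hq : ((n + j + 1).choose (j + 1) : K) * (n + 1 + j + 1)
      = (n + 1 + j + 1).choose (j + 1) * (n + 1) := by
    have h := Nat.choose_mul_succ_eq (n + j + 1) (j + 1)
    rw [show n + j + 1 + 1 - (j + 1) = n + 1 by omega,
      show n + j + 1 + 1 = n + 1 + j + 1 by ring] at h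
    exact_mod_cast h
  have hn := Nat.cast_add_one_ne_zero (R := K) n
  field_simp
  field_simp at hp
  linear_combination ((n + j + 1).choose (j + 1) : K) * hp - ((n + 1).choose (j + 1) : K) * hq

lemma alternating_sum_choose_div_succ (k : ℕ) :
    ∑ j ∈ range (k + 1), (-1 : K) ^ j * k.choose j / (j + 1) = 1 / (k + 1) := by
  have h := alternating_sum_choose_succ_mul_choose_add (Nat.succ_pos k)
  simp only [zero_add, Nat.choose_zero_right, Nat.cast_one, mul_one] at h
  replace h : ∑ j ∈ range (k + 1), (-1 : K) ^ j * (k + 1).choose (j + 1) = 1 := by exact_mod_cast h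
  simp_rw [mul_div_assoc, cast_choose_div_succ, ← mul_div_assoc, ← sum_div, h]

end Field

lemma H_succ (k : ℕ) : H (k + 1) = H k + 1 / (k + 1) := sum_range_succ _ _

lemma H2_succ (k : ℕ) : H2 (k + 1) = H2 k + 1 / (k + 1) ^ 2 := sum_range_succ _ _

lemma alternating_sum_choose_succ_div_succ (k : ℕ) :
    ∑ j ∈ range k, (-1 : ℝ) ^ j * k.choose (j + 1) / (j + 1) = H k := by
  induction k with
  | zero => simp [H]
  | succ k ih =>
    simp only [div_eq_mul_inv] at ih ⊢
    rw [alternating_sum_choose_succ_succ_mul, ih]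
    simp only [← div_eq_mul_inv]
    rw [alternating_sum_choose_div_succ, H_succ]
    ring

lemma alternating_sum_choose_succ_div_succ_sq (k : ℕ) :
    ∑ j ∈ range k, (-1 : ℝ) ^ j * k.choose (j + 1) / (j + 1) ^ 2 = (H k ^ 2 + H2 k) / 2 := by
  induction k with
  | zero => simp [H, H2]
  | succ k ih =>
    have hstep : ∑ j ∈ range (k + 1), (-1 : ℝ) ^ j * k.choose j / (j + 1) ^ 2
        = H (k + 1) / (k + 1) := by
      simp_rw [pow_two, ← div_div, mul_div_assoc, cast_choose_div_succ, ← mul_div_assoc,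
        div_right_comm _ ((k : ℝ) + 1), ← sum_div]
      rw [← alternating_sum_choose_succ_div_succ]
    simp only [div_eq_mul_inv] at ih hstep ⊢
    rw [alternating_sum_choose_succ_succ_mul, ih, hstep, H_succ, H2_succ]
    field_simp
    ring

lemma alternating_sum_legendre_div_succ (n : ℕ) :
    ∑ j ∈ range n, (-1 : ℝ) ^ j * n.choose (j + 1) * (n + j + 1).choose (j + 1) / (j + 1)
      = 2 * H n := by
  induction n with
  | zero => simp [H]
  | succ n ih =>
    calc ∑ j ∈ range (n + 1),
          (-1 : ℝ) ^ j * (n + 1).choose (j + 1) * (n + 1 + j + 1).choose (j + 1) / (j + 1)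
        = ∑ j ∈ range (n + 1),
            ((-1 : ℝ) ^ j * n.choose (j + 1) * (n + j + 1).choose (j + 1) / (j + 1)
              + 2 / (n + 1) *
                ((-1 : ℝ) ^ j * (n + 1).choose (j + 1) * (n + j + 1).choose (j + 1))) := by
          refine sum_congr rfl fun j _ ↦ ?_
          rw [mul_assoc _ ((n + 1).choose (j + 1) : ℝ), cast_choose_succ_mul_choose_add_succ]
          field_simp
      _ = 2 * H n + 2 / (n + 1) := by
          rw [sum_add_distrib, ← mul_sum, alternating_sum_choose_succ_mul_choose_succ_add,
            sum_range_succ, ih]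
          simp
      _ = 2 * H (n + 1) := by rw [H_succ]; ring

lemma alternating_sum_legendre_div_succ_sq (n : ℕ) :
    ∑ j ∈ range n, (-1 : ℝ) ^ j * n.choose (j + 1) * (n + j + 1).choose (j + 1) / (j + 1) ^ 2
      = 2 * H n ^ 2 := by
  induction n with
  | zero => simp [H]
  | succ n ih =>
    calc ∑ j ∈ range (n + 1),
          (-1 : ℝ) ^ j * (n + 1).choose (j + 1) * (n + 1 + j + 1).choose (j + 1) / (j + 1) ^ 2
        = ∑ j ∈ range (n + 1),
            ((-1 : ℝ) ^ j * n.choose (j + 1) * (n + j + 1).choose (j + 1) / (j + 1) ^ 2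
              + 2 / (n + 1) *
                ((-1 : ℝ) ^ j * n.choose (j + 1) * (n + j + 1).choose (j + 1) / (j + 1))
              + 2 / (n + 1) ^ 2 *
                ((-1 : ℝ) ^ j * (n + 1).choose (j + 1) * (n + j + 1).choose (j + 1))) := by
          refine sum_congr rfl fun j _ ↦ ?_
          have hp := cast_choose_succ_succ_eq (K := ℝ) n j
          rw [mul_assoc _ ((n + 1).choose (j + 1) : ℝ), cast_choose_succ_mul_choose_add_succ]
          field_simp
          field_simp at hp
          linear_combination (2 * (j + 1) * ((n + j + 1).choose (j + 1) : ℝ)) * hp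
      _ = 2 * H n ^ 2 + 2 / (n + 1) * (2 * H n) + 2 / (n + 1) ^ 2 := by
          rw [sum_add_distrib, sum_add_distrib, ← mul_sum, ← mul_sum,
            alternating_sum_choose_succ_mul_choose_succ_add, sum_range_succ, sum_range_succ, ih,
            alternating_sum_legendre_div_succ]
          simp
      _ = 2 * H (n + 1) ^ 2 := by rw [H_succ]; field_simp; ring

theorem stmt_13 (n : ℕ) :
    H n ^ 2 = (1 / 4) * ∑ k ∈ range (n + 1), (-1 : ℝ) ^ (n + k) *
      (n.choose k : ℝ) * ((n + k).choose k : ℝ) * (H k ^ 2 + H2 k) := by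
  have hbinomial : ∀ k, H k ^ 2 + H2 k
      = ∑ j ∈ range k, (k.choose (j + 1) : ℝ) * (2 * (-1) ^ j / (j + 1) ^ 2) := fun k ↦ by
    rw [← mul_div_cancel₀ (H k ^ 2 + H2 k) two_ne_zero, ← alternating_sum_choose_succ_div_succ_sq,
      mul_sum]
    exact sum_congr rfl fun j _ ↦ by ring
  simp_rw [hbinomial, alternating_sum_legendre_mul_sum_choose_succ]
  calc H n ^ 2 = 1 / 4 * (2 * (2 * H n ^ 2)) := by ring
    _ = _ := by
      rw [← alternating_sum_legendre_div_succ_sq, mul_sum]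
      exact congrArg _ (sum_congr rfl fun j _ ↦ by ring)
end

section
/- For every non-negative integer n, ∑_{k=0}^{n} C(n,k)² · (H_k² + H_k^{(2)}) = C(2n,n) · ((H_{2n} − 2H_n)² + 2·H_n^{(2)} − H_{2n}^{(2)}), where C(a,b) denotes the ordinary binomial coefficient. -/
/-!
Chu–Vandermonde gives the polynomial identity `∑ₖ C(n,k) C(x, n-k) = C(x+n, n)` in `x`.
At `x = n` the logarithmic derivative of `C(x, j) = x(x-1)⋯(x-j+1)/j!` is `H_n - H_{n-j}`, and
that of `C(x+n, n)` is `H_{2n} - H_n`. Comparing first and second derivatives at `x = n`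
evaluates `∑ C(n,k)² (H_n - H_k)` and `∑ C(n,k)² ((H_n - H_k)² - (H_n^{(2)} - H_k^{(2)}))`;
the theorem is a linear combination of these two sums and `∑ C(n,k)² = C(2n,n)`.
-/

open Finset

open Polynomial Nat

section LogDerivative

variable {K : Type*} [Field K]

theorem eval_derivative_descPochhammer {k : ℕ} {t : K} (ht : ∀ i < k, t ≠ i) :
    (derivative (descPochhammer K k)).eval t =
      (descPochhammer K k).eval t * ∑ i ∈ range k, 1 / (t - i) := by
  induction k with
  | zero => simp
  | succ k ih =>
    have hk : t - k ≠ 0 := sub_ne_zero.2 (ht k k.lt_succ_self)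
    simp only [descPochhammer_succ_right, derivative_mul, derivative_sub, derivative_X,
      derivative_natCast, sub_zero, mul_one, eval_add, eval_mul, eval_sub, eval_X, eval_natCast,
      ih fun i hi => ht i (by omega), sum_range_succ]
    field_simp

theorem eval_derivative_derivative_descPochhammer {k : ℕ} {t : K} (ht : ∀ i < k, t ≠ i) :
    (derivative (derivative (descPochhammer K k))).eval t =
      (descPochhammer K k).eval t *
        ((∑ i ∈ range k, 1 / (t - i)) ^ 2 - ∑ i ∈ range k, 1 / (t - i) ^ 2) := by
  induction k with
  | zero => simp
  | succ k ih =>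
    have ht' : ∀ i < k, t ≠ i := fun i hi => ht i (by omega)
    have hk : t - k ≠ 0 := sub_ne_zero.2 (ht k k.lt_succ_self)
    simp only [descPochhammer_succ_right, derivative_mul, derivative_add, derivative_sub,
      derivative_X, derivative_natCast, sub_zero, mul_one,
      eval_add, eval_mul, eval_sub, eval_X, eval_natCast, ih ht',
      eval_derivative_descPochhammer ht', sum_range_succ]
    field_simp
    ring

end LogDerivative

theorem sum_range_comp_natCast_sub (g : ℝ → ℝ) {k N : ℕ} (hk : k ≤ N) :
    ∑ i ∈ range k, g (N - i) =
      ∑ j ∈ range N, g (j + 1) - ∑ j ∈ range (N - k), g (j + 1) := by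
  obtain ⟨m, rfl⟩ := Nat.exists_eq_add_of_le' hk
  rw [sum_range_add, Nat.add_sub_cancel, add_sub_cancel_left, ← sum_range_reflect]
  refine sum_congr rfl fun i hi => congrArg g ?_
  have hi : i < k := mem_range.1 hi
  rw [Nat.sub_sub, Nat.cast_sub (by omega : 1 + i ≤ k)]
  push_cast
  ring

theorem H_sub_H_sub {k N : ℕ} (hk : k ≤ N) :
    H N - H (N - k) = ∑ i ∈ range k, 1 / ((N : ℝ) - i) :=
  (sum_range_comp_natCast_sub (fun x => 1 / x) hk).symm

theorem H2_sub_H2_sub {k N : ℕ} (hk : k ≤ N) :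
    H2 N - H2 (N - k) = ∑ i ∈ range k, 1 / ((N : ℝ) - i) ^ 2 :=
  (sum_range_comp_natCast_sub (fun x => 1 / x ^ 2) hk).symm

theorem natCast_ne_of_lt_of_le {R : Type*} [AddMonoidWithOne R] [CharZero R] {k N : ℕ}
    (hk : k ≤ N) : ∀ i < k, (N : R) ≠ i :=
  fun _ hi => Nat.cast_injective.ne (by omega)

theorem eval_natCast_derivative_descPochhammer {k N : ℕ} (hk : k ≤ N) :
    (derivative (descPochhammer ℝ k)).eval (N : ℝ) = N.descFactorial k * (H N - H (N - k)) := by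
  rw [eval_derivative_descPochhammer (natCast_ne_of_lt_of_le hk),
    descPochhammer_eval_eq_descFactorial, H_sub_H_sub hk]

theorem eval_natCast_derivative_derivative_descPochhammer {k N : ℕ} (hk : k ≤ N) :
    (derivative (derivative (descPochhammer ℝ k))).eval (N : ℝ) =
      N.descFactorial k * ((H N - H (N - k)) ^ 2 - (H2 N - H2 (N - k))) := by
  rw [eval_derivative_derivative_descPochhammer (natCast_ne_of_lt_of_le hk),
    descPochhammer_eval_eq_descFactorial, H_sub_H_sub hk, H2_sub_H2_sub hk]

theorem sum_C_choose_div_factorial_mul_descPochhammer {K : Type*} [Field K] [CharZero K]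
    (n : ℕ) :
    ∑ k ∈ range (n + 1), C ((n.choose k : K) / (n - k)!) * descPochhammer K (n - k) =
      C ((n ! : K)⁻¹) * (descPochhammer K n).comp (X + C (n : K)) := by
  refine eq_of_infinite_eval_eq _ _ <|
    (Set.infinite_range_of_injective Nat.cast_injective).mono ?_
  rintro _ ⟨m, rfl⟩
  have hvandermonde :
      ((n + m).choose n : K) = ∑ k ∈ range (n + 1), (n.choose k : K) * m.choose (n - k) := by
    rw [Nat.add_choose_eq,
      Nat.sum_antidiagonal_eq_sum_range_succ (fun i j => n.choose i * m.choose j)]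
    push_cast
    rfl
  simp only [Set.mem_ofPred_eq, eval_finsetSum, eval_mul, eval_C, eval_comp, eval_add, eval_X]
  rw [← Nat.cast_add, inv_mul_eq_div, ← Nat.cast_choose_eq_descPochhammer_div, Nat.add_comm m n,
    hvandermonde]
  refine sum_congr rfl fun k _ => ?_
  rw [Nat.cast_choose_eq_descPochhammer_div (K := K) m]
  ring

theorem choose_div_factorial_mul_descFactorial {K : Type*} [Field K] [CharZero K] {n k : ℕ}
    (hk : k ≤ n) : (n.choose k : K) / (n - k)! * n.descFactorial (n - k) = n.choose k ^ 2 := by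
  have : ((n - k)! : K) ≠ 0 := Nat.cast_ne_zero.2 (Nat.factorial_ne_zero _)
  rw [Nat.descFactorial_eq_factorial_mul_choose, Nat.choose_symm hk]
  push_cast
  field_simp

theorem inv_factorial_mul_descFactorial {K : Type*} [Field K] [CharZero K] (N k : ℕ) :
    (k ! : K)⁻¹ * N.descFactorial k = N.choose k := by
  rw [Nat.descFactorial_eq_factorial_mul_choose, Nat.cast_mul,
    inv_mul_cancel_left₀ (Nat.cast_ne_zero.2 k.factorial_ne_zero)]

theorem natCast_add_self {R : Type*} [AddMonoidWithOne R] (n : ℕ) :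
    (n : R) + n = (2 * n : ℕ) := by
  rw [two_mul, Nat.cast_add]

theorem sum_choose_sq_mul_H_sub_H (n : ℕ) :
    ∑ k ∈ range (n + 1), (n.choose k : ℝ) ^ 2 * (H n - H k) =
      (2 * n).choose n * (H (2 * n) - H n) := by
  have h := congrArg (fun p => (derivative p).eval (n : ℝ))
    (sum_C_choose_div_factorial_mul_descPochhammer (K := ℝ) n)
  simp only [derivative_sum, derivative_C_mul, derivative_comp, derivative_X_add_C,
    eval_finsetSum, eval_mul, eval_C, eval_comp, eval_add, eval_X, one_mul, natCast_add_self,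
    eval_natCast_derivative_descPochhammer (Nat.le_mul_of_pos_left n two_pos), ← mul_assoc,
    inv_factorial_mul_descFactorial, Nat.sub_eq_of_eq_add (two_mul n)] at h
  rw [← h]
  refine sum_congr rfl fun k hk => ?_
  have hk : k ≤ n := Nat.lt_succ_iff.1 (mem_range.1 hk)
  rw [eval_natCast_derivative_descPochhammer (Nat.sub_le n k), ← mul_assoc,
    choose_div_factorial_mul_descFactorial hk, Nat.sub_sub_self hk]

theorem sum_choose_sq_mul_H_sub_H_sq_sub (n : ℕ) :
    ∑ k ∈ range (n + 1), (n.choose k : ℝ) ^ 2 * ((H n - H k) ^ 2 - (H2 n - H2 k)) =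
      (2 * n).choose n * ((H (2 * n) - H n) ^ 2 - (H2 (2 * n) - H2 n)) := by
  have h := congrArg (fun p => (derivative (derivative p)).eval (n : ℝ))
    (sum_C_choose_div_factorial_mul_descPochhammer (K := ℝ) n)
  simp only [derivative_sum, derivative_C_mul, derivative_comp, derivative_X_add_C,
    eval_finsetSum, eval_mul, eval_C, eval_comp, eval_add, eval_X, one_mul, natCast_add_self,
    eval_natCast_derivative_derivative_descPochhammer (Nat.le_mul_of_pos_left n two_pos),
    ← mul_assoc, inv_factorial_mul_descFactorial, Nat.sub_eq_of_eq_add (two_mul n)] at h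
  rw [← h]
  refine sum_congr rfl fun k hk => ?_
  have hk : k ≤ n := Nat.lt_succ_iff.1 (mem_range.1 hk)
  rw [eval_natCast_derivative_derivative_descPochhammer (Nat.sub_le n k), ← mul_assoc,
    choose_div_factorial_mul_descFactorial hk, Nat.sub_sub_self hk]

theorem stmt_19 (n : ℕ) :
    ∑ k ∈ range (n + 1), (n.choose k : ℝ) ^ 2 * (H k ^ 2 + H2 k) =
      ((2 * n).choose n : ℝ) *
        ((H (2 * n) - 2 * H n) ^ 2 + 2 * H2 n - H2 (2 * n)) := by
  have hsq : ∑ k ∈ range (n + 1), (n.choose k : ℝ) ^ 2 = (2 * n).choose n := by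
    exact_mod_cast Nat.sum_range_choose_sq n
  calc ∑ k ∈ range (n + 1), (n.choose k : ℝ) ^ 2 * (H k ^ 2 + H2 k)
      = ∑ k ∈ range (n + 1), (n.choose k : ℝ) ^ 2 * ((H n - H k) ^ 2 - (H2 n - H2 k))
          - 2 * H n * ∑ k ∈ range (n + 1), (n.choose k : ℝ) ^ 2 * (H n - H k)
          + (H n ^ 2 + H2 n) * ∑ k ∈ range (n + 1), (n.choose k : ℝ) ^ 2 := by
        simp only [mul_sum, ← sum_sub_distrib, ← sum_add_distrib]
        exact sum_congr rfl fun k _ => by ring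
    _ = _ := by
        rw [sum_choose_sq_mul_H_sub_H_sq_sub, sum_choose_sq_mul_H_sub_H, hsq]
        ring
end
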